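/- arXiv:1607.01586 — 3 statements merged into one kernel-verified Lean document; each statement's English description precedes it below -/
import Mathlib

section
/- Let g : (0,∞) → ℝ be continuously differentiable. Suppose every critical point of g is a strict local maximum. Then g has at most one critical point, and if s₀ is a critical point, then g attains its global maximum over (0,∞) at s₀ provided additionally g(s) → −∞ as s → ∞ and g(s) → g(0⁺) with g(s₀) > limsup_{s→0⁺} g(s). -/
/-!
On a compact interval the minimum of `g` is attained at an endpoint: an interior minimum would be
a critical point, hence a strict local maximum. Between two critical points `s₁ < s₂` this is
impossible, since a strict local maximum at either endpoint produces smaller values just inside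
the interval. The same argument on `[s, s₀]` gives `g s ≤ g s₀` for `s ≤ s₀`. For `s > s₀`, since
`g → -∞` there is `N ≥ s` with `g N ≤ g s₀`, and the maximum of `g` over `[s₀, N]` is attained at
an endpoint or at an interior critical point, which can only be `s₀`.
-/

open Set Filter Topology

def IsStrictLocalMax (g : ℝ → ℝ) (x : ℝ) : Prop :=
  ∀ᶠ t in 𝓝[≠] x, g t < g x

namespace IsStrictLocalMax

variable {g : ℝ → ℝ} {x : ℝ}

theorem not_isLocalMin (h : IsStrictLocalMax g x) : ¬IsLocalMin g x := fun hmin =>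
  let ⟨_, hlt, hle⟩ := (h.and (hmin.filter_mono nhdsWithin_le_nhds)).exists
  (lt_of_le_of_lt hle hlt).false

theorem exists_mem_Ioo_lt_left (h : IsStrictLocalMax g x) {u : ℝ} (hu : u < x) :
    ∃ t ∈ Ioo u x, g t < g x :=
  ((show ∀ᶠ t in 𝓝[<] x, t ∈ Ioo u x from Ioo_mem_nhdsLT hu).and
    (h.filter_mono (nhdsLT_le_nhdsNE x))).exists

theorem exists_mem_Ioo_lt_right (h : IsStrictLocalMax g x) {v : ℝ} (hv : x < v) :
    ∃ t ∈ Ioo x v, g t < g x :=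
  ((show ∀ᶠ t in 𝓝[>] x, t ∈ Ioo x v from Ioo_mem_nhdsGT hv).and
    (h.filter_mono (nhdsGT_le_nhdsNE x))).exists

end IsStrictLocalMax

section Interval

variable {g g' : ℝ → ℝ} {a b : ℝ}

theorem min_endpoints_le_of_isStrictLocalMax
    (hderiv : ∀ x ∈ Icc a b, HasDerivAt g (g' x) x)
    (hmax : ∀ x ∈ Ioo a b, g' x = 0 → IsStrictLocalMax g x) :
    ∀ x ∈ Icc a b, min (g a) (g b) ≤ g x := by
  intro x hx
  obtain ⟨c, ⟨hac, hcb⟩, hmin⟩ :=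
    isCompact_Icc.exists_isMinOn ⟨x, hx⟩ (HasDerivAt.continuousOn hderiv)
  rcases hac.eq_or_lt with rfl | hac
  · exact (min_le_left _ _).trans (hmin hx)
  rcases hcb.eq_or_lt with rfl | hcb
  · exact (min_le_right _ _).trans (hmin hx)
  have hlocal : IsLocalMin g c := hmin.isLocalMin (Icc_mem_nhds hac hcb)
  have hcrit : g' c = 0 := hlocal.hasDerivAt_eq_zero (hderiv c ⟨hac.le, hcb.le⟩)
  exact absurd hlocal (hmax c ⟨hac, hcb⟩ hcrit).not_isLocalMin

theorem le_of_mem_Icc_of_unique_critical {s₀ : ℝ}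
    (hderiv : ∀ x ∈ Icc a b, HasDerivAt g (g' x) x)
    (huniq : ∀ c ∈ Ioo a b, g' c = 0 → c = s₀) (ha : g a ≤ g s₀) (hb : g b ≤ g s₀) :
    ∀ x ∈ Icc a b, g x ≤ g s₀ := by
  intro x hx
  obtain ⟨c, ⟨hac, hcb⟩, hmax⟩ :=
    isCompact_Icc.exists_isMaxOn ⟨x, hx⟩ (HasDerivAt.continuousOn hderiv)
  rcases hac.eq_or_lt with rfl | hac
  · exact (hmax hx).trans ha
  rcases hcb.eq_or_lt with rfl | hcb
  · exact (hmax hx).trans hb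
  have hlocal : IsLocalMax g c := hmax.isLocalMax (Icc_mem_nhds hac hcb)
  have hcrit : g' c = 0 := hlocal.hasDerivAt_eq_zero (hderiv c ⟨hac.le, hcb.le⟩)
  exact huniq c ⟨hac, hcb⟩ hcrit ▸ hmax hx

end Interval

section OrdConnected

variable {g g' : ℝ → ℝ} {I : Set ℝ}

theorem eq_of_critical_of_isStrictLocalMax (hI : I.OrdConnected)
    (hderiv : ∀ x ∈ I, HasDerivAt g (g' x) x)
    (hmax : ∀ x ∈ I, g' x = 0 → IsStrictLocalMax g x) {s₁ s₂ : ℝ} (hs₁ : s₁ ∈ I)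
    (hs₂ : s₂ ∈ I) (h₁ : g' s₁ = 0) (h₂ : g' s₂ = 0) : s₁ = s₂ := by
  wlog hlt : s₁ < s₂ generalizing s₁ s₂
  · rcases (not_lt.1 hlt).eq_or_lt with h | h
    · exact h.symm
    · exact (this hs₂ hs₁ h₂ h₁ h).symm
  have hsub : Icc s₁ s₂ ⊆ I := hI.out hs₁ hs₂
  have hmin := min_endpoints_le_of_isStrictLocalMax (g' := g')
    (fun x hx => hderiv x (hsub hx))
    (fun x hx => hmax x (hsub (Ioo_subset_Icc_self hx)))
  obtain ⟨t₁, ht₁, hlt₁⟩ := (hmax s₁ hs₁ h₁).exists_mem_Ioo_lt_right hlt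
  obtain ⟨t₂, ht₂, hlt₂⟩ := (hmax s₂ hs₂ h₂).exists_mem_Ioo_lt_left hlt
  have hle₁ := hmin t₁ (Ioo_subset_Icc_self ht₁)
  have hle₂ := hmin t₂ (Ioo_subset_Icc_self ht₂)
  rcases min_choice (g s₁) (g s₂) with h | h <;> rw [h] at hle₁ hle₂ <;> linarith

theorem le_of_le_critical_of_isStrictLocalMax (hI : I.OrdConnected)
    (hderiv : ∀ x ∈ I, HasDerivAt g (g' x) x)
    (hmax : ∀ x ∈ I, g' x = 0 → IsStrictLocalMax g x) {s s₀ : ℝ} (hs : s ∈ I)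
    (hs₀ : s₀ ∈ I) (h₀ : g' s₀ = 0) (hle : s ≤ s₀) : g s ≤ g s₀ := by
  rcases hle.eq_or_lt with rfl | hlt
  · exact le_rfl
  have hsub : Icc s s₀ ⊆ I := hI.out hs hs₀
  have hmin := min_endpoints_le_of_isStrictLocalMax (g' := g')
    (fun x hx => hderiv x (hsub hx))
    (fun x hx => hmax x (hsub (Ioo_subset_Icc_self hx)))
  obtain ⟨t, ht, hgt⟩ := (hmax s₀ hs₀ h₀).exists_mem_Ioo_lt_left hlt
  rcases min_le_iff.1 (hmin t (Ioo_subset_Icc_self ht)) with h | h <;> linarith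

end OrdConnected

theorem isStrictLocalMax_of_forall_abs_sub_lt {g : ℝ → ℝ} {s ε : ℝ} (hs : 0 < s) (hε : 0 < ε)
    (h : ∀ t ∈ Ioi (0 : ℝ), t ≠ s → |t - s| < ε → g t < g s) : IsStrictLocalMax g s := by
  rw [IsStrictLocalMax, eventually_nhdsWithin_iff]
  filter_upwards [Ioi_mem_nhds hs, Metric.ball_mem_nhds s hε] with t ht hball hne
  exact h t ht hne hball

theorem stmt_4_general (g g' : ℝ → ℝ)
    (hderiv : ∀ s ∈ Set.Ioi (0:ℝ), HasDerivAt g (g' s) s)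
    (hmax : ∀ s ∈ Set.Ioi (0:ℝ), g' s = 0 →
      ∃ ε > (0:ℝ), ∀ t ∈ Set.Ioi (0:ℝ), t ≠ s → |t - s| < ε → g t < g s) :
    (∀ s₁ ∈ Set.Ioi (0:ℝ), ∀ s₂ ∈ Set.Ioi (0:ℝ), g' s₁ = 0 → g' s₂ = 0 → s₁ = s₂) ∧
    (Filter.Tendsto g Filter.atTop Filter.atBot →
      ∀ s₀ ∈ Set.Ioi (0:ℝ), g' s₀ = 0 →
        g s₀ > Filter.limsup g (nhdsWithin 0 (Set.Ioi 0)) →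
        ∀ s ∈ Set.Ioi (0:ℝ), g s ≤ g s₀) := by
  have hstrict : ∀ s ∈ Ioi (0 : ℝ), g' s = 0 → IsStrictLocalMax g s := fun s hs hcrit =>
    let ⟨_, hε, h⟩ := hmax s hs hcrit
    isStrictLocalMax_of_forall_abs_sub_lt hs hε h
  have huniq : ∀ s₁ ∈ Ioi (0 : ℝ), ∀ s₂ ∈ Ioi (0 : ℝ), g' s₁ = 0 → g' s₂ = 0 → s₁ = s₂ :=
    fun _ hs₁ _ hs₂ => eq_of_critical_of_isStrictLocalMax ordConnected_Ioi hderiv hstrict hs₁ hs₂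
  refine ⟨huniq, fun htend s₀ hs₀ h₀ _ s hs => ?_⟩
  rcases le_or_gt s s₀ with hle | hlt
  · exact le_of_le_critical_of_isStrictLocalMax ordConnected_Ioi hderiv hstrict hs hs₀ h₀ hle
  obtain ⟨N, hN, hsN⟩ :=
    ((htend.eventually (eventually_le_atBot (g s₀))).and (eventually_ge_atTop s)).exists
  have hsub : Icc s₀ N ⊆ Ioi 0 := ordConnected_Ioi.out hs₀ (hs₀.trans_le (hlt.le.trans hsN))
  exact le_of_mem_Icc_of_unique_critical
    (fun x hx => hderiv x (hsub hx))
    (fun c hc hcrit => huniq c (hsub (Ioo_subset_Icc_self hc)) s₀ hs₀ hcrit h₀) le_rfl hN s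
    ⟨hlt.le, hsN⟩

/-- A `C¹` function on `(0,∞)` all of whose critical points are strict local
maxima has at most one critical point; and if moreover `g → −∞` at `∞` and
`g(s₀) > limsup_{s→0⁺} g(s)` at a critical point `s₀`, then `g` attains its global
maximum over `(0,∞)` at `s₀`. -/
theorem stmt_4 (g g' : ℝ → ℝ)
    (hderiv : ∀ s ∈ Set.Ioi (0:ℝ), HasDerivAt g (g' s) s)
    (hcont : ContinuousOn g' (Set.Ioi 0))
    (hmax : ∀ s ∈ Set.Ioi (0:ℝ), g' s = 0 →
      ∃ ε > (0:ℝ), ∀ t ∈ Set.Ioi (0:ℝ), t ≠ s → |t - s| < ε → g t < g s) :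
    (∀ s₁ ∈ Set.Ioi (0:ℝ), ∀ s₂ ∈ Set.Ioi (0:ℝ), g' s₁ = 0 → g' s₂ = 0 → s₁ = s₂) ∧
    (Filter.Tendsto g Filter.atTop Filter.atBot →
      ∀ s₀ ∈ Set.Ioi (0:ℝ), g' s₀ = 0 →
        g s₀ > Filter.limsup g (nhdsWithin 0 (Set.Ioi 0)) →
        ∀ s ∈ Set.Ioi (0:ℝ), g s ≤ g s₀) :=
  stmt_4_general g g' hderiv hmax
end

section
/- Let a, b > 0, p > 1, A > 0 and let h : (0,∞) → ℝ be differentiable with s·h'(s) > (p²−1)·h(s) for all s > 0 and h(s) > 0 for all s > 0. Define g'(s) = A·(a + b·A·s^p)^{p−1}·s^{p−1} − h(s). If g'(s₀) = 0 for some s₀ > 0, then g''(s₀) < 0, where g''(s) = bp(p−1)A²(a+bAs^p)^{p−2}s^{2p−2} + (p−1)A(a+bAs^p)^{p−1}s^{p−2} − h'(s). -/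
/-!
At a critical point `h(s₀) = A K^{p-1} s₀^{p-1}` with `K = a + bAs₀^p`, and `s h'(s) > (p² - 1) h(s)` bounds
`h'(s₀)` below by `(p² - 1) A K^{p-1} s₀^{p-2}`. Substituting, the `bAs₀^p` contributions of the
two terms of `g''` cancel against this bound, leaving `g''(s₀) < a A K^{p-2} (p - p²) s₀^{p-2} < 0`.
-/

lemma Real.rpow_sub_one_eq_rpow_sub_two_mul {x : ℝ} (hx : 0 < x) (p : ℝ) :
    x ^ (p - 1) = x ^ (p - 2) * x := by
  rw [show p - 1 = (p - 2) + 1 by ring, Real.rpow_add hx, Real.rpow_one]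

lemma Real.rpow_two_mul_sub_two {x : ℝ} (hx : 0 < x) (p : ℝ) :
    x ^ (2 * p - 2) = x ^ p * x ^ (p - 2) := by
  rw [show 2 * p - 2 = p + (p - 2) by ring, Real.rpow_add hx]

lemma fiber_second_deriv_lt_of_critical {a b p A s hs dhs : ℝ} (hs_pos : 0 < s)
    (hK : 0 < a + b * A * s ^ p)
    (hcrit : A * (a + b * A * s ^ p) ^ (p - 1) * s ^ (p - 1) = hs)
    (hineq : s * dhs > (p ^ 2 - 1) * hs) :
    b * p * (p - 1) * A ^ 2 * (a + b * A * s ^ p) ^ (p - 2) * s ^ (2 * p - 2)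
        + (p - 1) * A * (a + b * A * s ^ p) ^ (p - 1) * s ^ (p - 2) - dhs
      < a * A * (a + b * A * s ^ p) ^ (p - 2) * (p - p ^ 2) * s ^ (p - 2) := by
  set K := a + b * A * s ^ p with hK_def
  rw [Real.rpow_sub_one_eq_rpow_sub_two_mul hK, Real.rpow_two_mul_sub_two hs_pos] at *
  rw [Real.rpow_sub_one_eq_rpow_sub_two_mul hs_pos] at hcrit
  have hdhs : dhs > (p ^ 2 - 1) * A * (K ^ (p - 2) * K) * s ^ (p - 2) := by
    rw [← hcrit] at hineq
    refine lt_of_mul_lt_mul_left ?_ hs_pos.le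
    linear_combination hineq
  rw [hK_def] at hdhs ⊢
  linear_combination hdhs

theorem stmt_14_general (a b p A : ℝ) (ha : 0 < a) (hb : 0 < b) (hp : 1 < p) (hA : 0 < A)
    (h h' : ℝ → ℝ)
    (hineq : ∀ s > (0:ℝ), s * h' s > (p ^ 2 - 1) * h s) :
    ∀ s₀ > (0:ℝ),
      A * (a + b * A * s₀ ^ p) ^ (p - 1) * s₀ ^ (p - 1) - h s₀ = 0 →
      b * p * (p - 1) * A ^ 2 * (a + b * A * s₀ ^ p) ^ (p - 2) * s₀ ^ (2 * p - 2)
        + (p - 1) * A * (a + b * A * s₀ ^ p) ^ (p - 1) * s₀ ^ (p - 2)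
        - h' s₀ < 0 := by
  intro s₀ hs₀ hcrit
  have hK : 0 < a + b * A * s₀ ^ p := by positivity
  have hbound := fiber_second_deriv_lt_of_critical hs₀ hK (sub_eq_zero.mp hcrit) (hineq s₀ hs₀)
  have hneg : a * A * (a + b * A * s₀ ^ p) ^ (p - 2) * (p - p ^ 2) * s₀ ^ (p - 2) < 0 := by
    have : p - p ^ 2 < 0 := by nlinarith
    have := mul_pos (mul_pos (mul_pos ha hA) (Real.rpow_pos_of_pos hK (p - 2)))
      (Real.rpow_pos_of_pos hs₀ (p - 2))
    nlinarith
  exact hbound.trans hneg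

/-- every critical point of the fiber map is a strict local maximum
(computation (3.6)). -/
theorem stmt_14 (a b p A : ℝ) (ha : 0 < a) (hb : 0 < b) (hp : 1 < p) (hA : 0 < A)
    (h h' : ℝ → ℝ)
    (hderiv : ∀ s > (0:ℝ), HasDerivAt h (h' s) s)
    (hineq : ∀ s > (0:ℝ), s * h' s > (p ^ 2 - 1) * h s)
    (hpos : ∀ s > (0:ℝ), 0 < h s) :
    ∀ s₀ > (0:ℝ),
      A * (a + b * A * s₀ ^ p) ^ (p - 1) * s₀ ^ (p - 1) - h s₀ = 0 →
      b * p * (p - 1) * A ^ 2 * (a + b * A * s₀ ^ p) ^ (p - 2) * s₀ ^ (2 * p - 2)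
        + (p - 1) * A * (a + b * A * s₀ ^ p) ^ (p - 1) * s₀ ^ (p - 2)
        - h' s₀ < 0 :=
  stmt_14_general a b p A ha hb hp hA h h' hineq
end

section
/- Let 1/p < α ≤ 1 with 1 < p < ∞ and q = p/(p−1). For u ∈ C_0^∞((0,T),ℝ) one has ‖u‖_∞ ≤ (T^{α−1/p}/(Γ(α)(αq−q+1)^{1/q}))·‖₀D_t^α u‖_{L^p(0,T)}. -/
open MeasureTheory

/-- Left Riemann–Liouville fractional integral of order `γ` (base point `0`). -/
noncomputable def leftRLintegral (γ : ℝ) (u : ℝ → ℝ) (t : ℝ) : ℝ :=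
  (1 / Real.Gamma γ) * ∫ s in (0:ℝ)..t, (t - s) ^ (γ - 1) * u s

/-- Left Riemann–Liouville fractional derivative of order `α ∈ (0,1]` (base point `0`). -/
noncomputable def leftRLderiv (α : ℝ) (u : ℝ → ℝ) : ℝ → ℝ :=
  if α = 1 then deriv u else deriv (leftRLintegral (1 - α) u)

namespace Stmt17Aux

open Set Filter Metric

/-- The power kernel `x ↦ x^(γ-1)` for `x > 0`, extended by `0`. -/
noncomputable def kk (γ : ℝ) : ℝ → ℝ := (Set.Ioi (0:ℝ)).indicator (fun x => x ^ (γ - 1))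

lemma kk_nonneg (γ x : ℝ) : 0 ≤ kk γ x := by
  unfold kk
  apply Set.indicator_apply_nonneg
  intro h
  exact Real.rpow_nonneg (le_of_lt h) _

lemma kk_of_pos (γ : ℝ) {x : ℝ} (h : 0 < x) : kk γ x = x ^ (γ - 1) :=
  Set.indicator_of_mem h _

lemma kk_of_nonpos (γ : ℝ) {x : ℝ} (h : x ≤ 0) : kk γ x = 0 :=
  Set.indicator_of_notMem (by simpa using h) _

lemma measurable_kk (γ : ℝ) : Measurable (kk γ) :=
  (measurable_id.pow_const _).indicator measurableSet_Ioi

lemma integrableOn_rpow_Ioc {c : ℝ} (hc : -1 < c) (b : ℝ) :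
    IntegrableOn (fun x : ℝ => x ^ c) (Set.Ioc 0 b) := by
  rcases le_or_gt b 0 with h | h
  · rw [Set.Ioc_eq_empty (fun hb => absurd (lt_of_lt_of_le hb h) (lt_irrefl 0))]
    exact integrableOn_empty
  · have := intervalIntegral.intervalIntegrable_rpow' (a := 0) (b := b) hc
    rwa [intervalIntegrable_iff_integrableOn_Ioc_of_le h.le] at this

lemma integrableOn_kk_Ioc {γ : ℝ} (hγ : 0 < γ) (a b : ℝ) :
    IntegrableOn (kk γ) (Set.Ioc a b) := by
  have h1 : IntegrableOn (fun x : ℝ => x ^ (γ - 1)) (Set.Ioc 0 b) :=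
    integrableOn_rpow_Ioc (by linarith) b
  unfold kk
  rw [IntegrableOn, integrable_indicator_iff measurableSet_Ioi, IntegrableOn,
    Measure.restrict_restrict measurableSet_Ioi]
  exact h1.mono_set (fun x hx => ⟨hx.1, hx.2.2⟩)

lemma intervalIntegrable_kk {γ : ℝ} (hγ : 0 < γ) (a b : ℝ) :
    IntervalIntegrable (kk γ) volume a b := by
  rw [intervalIntegrable_iff]
  exact integrableOn_kk_Ioc hγ _ _

lemma integrableOn_kk_sub {γ : ℝ} (hγ : 0 < γ) (x : ℝ) {a b : ℝ} (hab : a ≤ b) :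
    IntegrableOn (fun τ => kk γ (x - τ)) (Set.Ioc a b) := by
  have h := (intervalIntegrable_kk hγ (x - a) (x - b)).comp_sub_left x
  rw [sub_sub_cancel, sub_sub_cancel] at h
  rwa [intervalIntegrable_iff_integrableOn_Ioc_of_le hab] at h

/-- Monotone bound of the kernel integral. -/
lemma kk_setIntegral_le {γ : ℝ} (hγ : 0 < γ) {a b c : ℝ} (hbc : b ≤ c) :
    ∫ r in Set.Ioc a b, kk γ r ≤ ∫ r in Set.Ioc 0 c, kk γ r := by
  unfold kk
  rw [setIntegral_indicator measurableSet_Ioi, setIntegral_indicator measurableSet_Ioi]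
  apply setIntegral_mono_set
  · apply (integrableOn_rpow_Ioc (by linarith) c).mono_set
    exact fun x hx => ⟨hx.2, hx.1.2⟩
  · filter_upwards [ae_restrict_mem (measurableSet_Ioc.inter measurableSet_Ioi)] with x hx
    exact Real.rpow_nonneg hx.2.le _
  · exact HasSubset.Subset.eventuallyLE (fun x hx => ⟨⟨hx.2, le_trans hx.1.2 hbc⟩, hx.2⟩)

/-- Shift: `∫ σ, kk γ (t - σ) * g σ = ∫ r, kk γ r * g (t - r)`. -/
lemma integral_shift (γ : ℝ) (g : ℝ → ℝ) (t : ℝ) :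
    ∫ σ, kk γ (t - σ) * g σ = ∫ r, kk γ r * g (t - r) := by
  rw [← integral_sub_left_eq_self (fun r => kk γ r * g (t - r)) volume t]
  congr 1
  funext σ
  rw [sub_sub_cancel]

section Main

variable {T : ℝ}

/-- Auxiliary integrability: `r ↦ kk γ r * g (t - r)` is integrable when `g` is bounded,
vanishes outside `(0,T)`, and `t ≤ c`. -/
lemma integrable_kk_smul_aux {γ : ℝ} (hγ : 0 < γ) {g : ℝ → ℝ} (hg : Continuous g)
    (hgz : ∀ s, s ∉ Set.Ioo 0 T → g s = 0) {M c t : ℝ} (hM : ∀ s, |g s| ≤ M) (htc : t ≤ c) :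
    Integrable (fun r => kk γ r * g (t - r)) := by
  apply Integrable.mono' (g := (Set.Ioc 0 c).indicator fun r => M * r ^ (γ - 1))
  · exact IntegrableOn.integrable_indicator
      ((integrableOn_rpow_Ioc (show (-1:ℝ) < γ - 1 by linarith) c).const_mul M) measurableSet_Ioc
  · exact ((measurable_kk γ).mul
      ((hg.comp (continuous_const.sub continuous_id)).measurable)).aestronglyMeasurable
  · apply Filter.Eventually.of_forall
    intro r
    rw [Real.norm_eq_abs, abs_mul, abs_of_nonneg (kk_nonneg γ r)]
    by_cases hr : r ∈ Set.Ioc 0 c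
    · rw [Set.indicator_of_mem hr, kk_of_pos γ hr.1]
      rw [mul_comm M _]
      exact mul_le_mul_of_nonneg_left (hM _) (Real.rpow_nonneg hr.1.le _)
    · rw [Set.indicator_of_notMem hr]
      rcases le_or_gt r 0 with h | h
      · rw [kk_of_nonpos γ h, zero_mul]
      · have hrc : c < r := by
          by_contra hcon
          exact hr ⟨h, not_lt.1 hcon⟩
        have : g (t - r) = 0 := hgz _ (fun hmem => absurd hmem.1 (by linarith))
        rw [this, abs_zero, mul_zero]

variable (hT : 0 < T)

/-- Key differentiation lemma: derivative of the smoothed kernel integral. -/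
lemma hasDerivAt_Phi {γ : ℝ} (hγ : 0 < γ) {w : ℝ → ℝ} (hw : ContDiff ℝ (⊤ : ℕ∞) w)
    (hsupp : tsupport w ⊆ Set.Ioo 0 T) (t₀ : ℝ) :
    HasDerivAt (fun t => ∫ r, kk γ r * w (t - r)) (∫ r, kk γ r * deriv w (t₀ - r)) t₀ := by
  have hwc : Continuous w := hw.continuous
  have hw'c : Continuous (deriv w) := hw.continuous_deriv (by exact_mod_cast le_top)
  have hwz : ∀ s, s ∉ Set.Ioo 0 T → w s = 0 := fun s hs =>
    image_eq_zero_of_notMem_tsupport (fun h => hs (hsupp h))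
  have hw'z : ∀ s, s ∉ Set.Ioo 0 T → deriv w s = 0 := by
    intro s hs
    by_contra h
    exact hs (hsupp (support_deriv_subset (by simpa using h)))
  have hcs : HasCompactSupport w :=
    IsCompact.of_isClosed_subset isCompact_Icc (isClosed_tsupport w)
      (hsupp.trans Set.Ioo_subset_Icc_self)
  have hcs' : HasCompactSupport (deriv w) := hcs.deriv
  obtain ⟨Mw, hMw⟩ := hcs.exists_bound_of_continuous hwc
  obtain ⟨Mw', hMw'⟩ := hcs'.exists_bound_of_continuous hw'c
  simp only [Real.norm_eq_abs] at hMw hMw'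
  have key := hasDerivAt_integral_of_dominated_loc_of_deriv_le (μ := volume) (x₀ := t₀)
    (F := fun t r => kk γ r * w (t - r)) (F' := fun t r => kk γ r * deriv w (t - r))
    (bound := (Set.Ioc 0 (t₀ + 1)).indicator fun r => Mw' * r ^ (γ - 1))
    (s := Metric.ball t₀ 1) (Metric.ball_mem_nhds t₀ one_pos)
    (Filter.Eventually.of_forall fun t =>
      ((measurable_kk γ).mul
        ((hwc.comp (continuous_const.sub continuous_id)).measurable)).aestronglyMeasurable)
    (integrable_kk_smul_aux hγ hwc hwz hMw (by linarith : t₀ ≤ t₀ + 1))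
    (((measurable_kk γ).mul
      ((hw'c.comp (continuous_const.sub continuous_id)).measurable)).aestronglyMeasurable)
    ?_ ?_ ?_
  · exact key.2
  · -- bound
    apply Filter.Eventually.of_forall
    intro r t ht
    have htlt : t < t₀ + 1 := by
      rw [Metric.mem_ball, Real.dist_eq] at ht
      have := abs_lt.1 ht
      linarith [this.2]
    rw [Real.norm_eq_abs, abs_mul, abs_of_nonneg (kk_nonneg γ r)]
    by_cases hr : r ∈ Set.Ioc 0 (t₀ + 1)
    · rw [Set.indicator_of_mem hr, kk_of_pos γ hr.1, mul_comm Mw' _]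
      exact mul_le_mul_of_nonneg_left (hMw' _) (Real.rpow_nonneg hr.1.le _)
    · rw [Set.indicator_of_notMem hr]
      rcases le_or_gt r 0 with h | h
      · rw [kk_of_nonpos γ h, zero_mul]
      · have hrc : t₀ + 1 < r := by
          by_contra hcon
          exact hr ⟨h, not_lt.1 hcon⟩
        have : deriv w (t - r) = 0 := hw'z _ (fun hmem => absurd hmem.1 (by linarith))
        rw [this, abs_zero, mul_zero]
  · -- integrability of bound
    exact IntegrableOn.integrable_indicator
      ((integrableOn_rpow_Ioc (show (-1:ℝ) < γ - 1 by linarith) (t₀ + 1)).const_mul Mw')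
      measurableSet_Ioc
  · -- differentiability
    apply Filter.Eventually.of_forall
    intro r t _
    have hd : HasDerivAt w (deriv w (t - r)) (t - r) :=
      ((hw.differentiable (by simp)) (t - r)).hasDerivAt
    have := (hd.comp t ((hasDerivAt_id t).sub_const r))
    simpa using this.const_mul (kk γ r)

/-- Values of `leftRLintegral` via the kernel `kk`. -/
lemma leftRLintegral_eq {γ : ℝ} {w : ℝ → ℝ} (hw : Continuous w)
    (hwz : ∀ s, s ∉ Set.Ioo 0 T → w s = 0) (t : ℝ) :
    leftRLintegral γ w t = (1 / Real.Gamma γ) * ∫ σ, kk γ (t - σ) * w σ := by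
  rcases le_or_gt 0 t with h | h
  · rw [leftRLintegral]
    congr 1
    rw [intervalIntegral.integral_of_le h, integral_Ioc_eq_integral_Ioo]
    rw [show (∫ σ, kk γ (t - σ) * w σ) = ∫ σ in Set.Ioo 0 t, kk γ (t - σ) * w σ from
      (setIntegral_eq_integral_of_forall_compl_eq_zero ?_).symm]
    · apply setIntegral_congr_fun measurableSet_Ioo
      intro s hs
      show (t - s) ^ (γ - 1) * w s = kk γ (t - s) * w s
      rw [kk_of_pos γ (by linarith [hs.2] : 0 < t - s)]
    · intro σ hσ
      rcases le_or_gt σ 0 with h1 | h1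
      · rw [hwz σ (fun hmem => absurd hmem.1 (by linarith)), mul_zero]
      · have : t ≤ σ := by
          by_contra hcon
          exact hσ ⟨h1, not_le.1 hcon⟩
        rw [kk_of_nonpos γ (by linarith), zero_mul]
  · have h1 : ∫ s in (0:ℝ)..t, (t - s) ^ (γ - 1) * w s = 0 := by
      rw [intervalIntegral.integral_congr (g := fun _ => 0)]
      · simp
      · intro s hs
        rw [Set.uIcc_of_ge h.le] at hs
        have hs0 : s ≤ 0 := hs.2
        simp [hwz s (fun hmem => absurd hmem.1 (by linarith))]
    have h2 : ∫ σ, kk γ (t - σ) * w σ = 0 := by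
      rw [show (fun σ => kk γ (t - σ) * w σ) = fun _ => (0:ℝ) from ?_, integral_zero]
      funext σ
      rcases le_or_gt σ 0 with h1 | h1
      · rw [hwz σ (fun hmem => absurd hmem.1 (by linarith)), mul_zero]
      · rw [kk_of_nonpos γ (by linarith), zero_mul]
    rw [leftRLintegral, h1, h2]

/-- Real Beta integral evaluation. -/
lemma real_beta {s t a : ℝ} (hs : 0 < s) (ht : 0 < t) (ha : 0 < a) :
    ∫ x in (0:ℝ)..a, x ^ (s - 1) * (a - x) ^ (t - 1)
      = a ^ (s + t - 1) * (Real.Gamma s * Real.Gamma t / Real.Gamma (s + t)) := by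
  have hGst : Real.Gamma (s + t) ≠ 0 := (Real.Gamma_pos_of_pos (by linarith)).ne'
  have hbeta := Complex.Gamma_mul_Gamma_eq_betaIntegral
    (s := (s:ℂ)) (t := (t:ℂ)) (by simpa using hs) (by simpa using ht)
  have hscaled := Complex.betaIntegral_scaled (s:ℂ) (t:ℂ) ha
  have hofreal : (∫ x in (0:ℝ)..a, (x:ℂ) ^ ((s:ℂ) - 1) * ((a:ℂ) - x) ^ ((t:ℂ) - 1))
      = ((∫ x in (0:ℝ)..a, x ^ (s - 1) * (a - x) ^ (t - 1) : ℝ) : ℂ) := by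
    rw [← intervalIntegral.integral_ofReal]
    apply intervalIntegral.integral_congr
    intro x hx
    rw [Set.uIcc_of_le ha.le] at hx
    show (x:ℂ) ^ ((s:ℂ) - 1) * ((a:ℂ) - (x:ℂ)) ^ ((t:ℂ) - 1)
      = ((x ^ (s - 1) * (a - x) ^ (t - 1) : ℝ) : ℂ)
    rw [Complex.ofReal_mul, Complex.ofReal_cpow hx.1 (s - 1),
      Complex.ofReal_cpow (by linarith [hx.2] : (0:ℝ) ≤ a - x) (t - 1)]
    push_cast
    ring
  have hB : Complex.betaIntegral (s:ℂ) (t:ℂ)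
      = ((Real.Gamma s * Real.Gamma t / Real.Gamma (s + t) : ℝ) : ℂ) := by
    have hGsum : Complex.Gamma ((s:ℂ) + (t:ℂ)) = ((Real.Gamma (s + t) : ℝ) : ℂ) := by
      rw [show ((s:ℂ) + (t:ℂ)) = ((s + t : ℝ) : ℂ) by push_cast; ring, Complex.Gamma_ofReal]
    have hne : ((Real.Gamma (s + t) : ℝ) : ℂ) ≠ 0 := by simpa using hGst
    rw [hGsum, Complex.Gamma_ofReal, Complex.Gamma_ofReal] at hbeta
    push_cast
    rw [eq_div_iff hne]
    linear_combination -hbeta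
  have hpow : ((a:ℂ)) ^ ((s:ℂ) + (t:ℂ) - 1) = ((a ^ (s + t - 1) : ℝ) : ℂ) := by
    rw [Complex.ofReal_cpow ha.le (s + t - 1)]
    congr 1
    push_cast
    ring
  rw [hofreal, hB, hpow] at hscaled
  have := hscaled
  rw [← Complex.ofReal_mul] at this
  exact_mod_cast this

/-- The convolution of two power kernels with exponents summing to 1. -/
lemma kernel_conv {a b : ℝ} (ha : 0 < a) (hb : 0 < b) (hab : a + b = 1) (t τ : ℝ) :
    ∫ σ, kk a (t - σ) * kk b (σ - τ)
      = if τ < t then Real.Gamma a * Real.Gamma b else 0 := by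
  by_cases hτ : τ < t
  · rw [if_pos hτ]
    rw [show (∫ σ, kk a (t - σ) * kk b (σ - τ))
        = ∫ σ in Set.Ioo τ t, kk a (t - σ) * kk b (σ - τ) from
      (setIntegral_eq_integral_of_forall_compl_eq_zero ?_).symm]
    · have hcongr : ∫ σ in Set.Ioo τ t, kk a (t - σ) * kk b (σ - τ)
          = ∫ σ in Set.Ioo τ t, (σ - τ) ^ (b - 1) * (t - σ) ^ (a - 1) := by
        apply setIntegral_congr_fun measurableSet_Ioo
        intro σ hσ
        show kk a (t - σ) * kk b (σ - τ) = (σ - τ) ^ (b - 1) * (t - σ) ^ (a - 1)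
        rw [kk_of_pos a (show (0:ℝ) < t - σ by linarith [hσ.2]),
          kk_of_pos b (show (0:ℝ) < σ - τ by linarith [hσ.1])]
        ring
      rw [hcongr, ← integral_Ioc_eq_integral_Ioo, ← intervalIntegral.integral_of_le hτ.le]
      have hcomp := intervalIntegral.integral_comp_add_right (a := (0:ℝ)) (b := t - τ)
        (fun σ => (σ - τ) ^ (b - 1) * (t - σ) ^ (a - 1)) τ
      rw [zero_add, sub_add_cancel] at hcomp
      rw [← hcomp]
      have : (fun x => (x + τ - τ) ^ (b - 1) * (t - (x + τ)) ^ (a - 1))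
          = fun x => x ^ (b - 1) * ((t - τ) - x) ^ (a - 1) := by
        funext x; ring_nf
      rw [this, real_beta hb ha (by linarith)]
      rw [show b + a - 1 = 0 by linarith, Real.rpow_zero, show b + a = 1 by linarith,
        Real.Gamma_one, one_mul, div_one, mul_comm]
    · intro σ hσ
      rcases le_or_gt σ τ with h1 | h1
      · rw [kk_of_nonpos b (by linarith), mul_zero]
      · have : t ≤ σ := by
          by_contra hcon
          exact hσ ⟨h1, not_le.1 hcon⟩
        rw [kk_of_nonpos a (by linarith), zero_mul]
  · rw [if_neg hτ]
    rw [show (fun σ => kk a (t - σ) * kk b (σ - τ)) = fun _ => (0:ℝ) from ?_, integral_zero]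
    funext σ
    rcases le_or_gt σ τ with h1 | h1
    · rw [kk_of_nonpos b (by linarith), mul_zero]
    · rw [kk_of_nonpos a (by linarith [not_lt.1 hτ]), zero_mul]


/-- Integrability of kernel times bounded compactly supported function. -/
lemma integrable_kk_mul (hT : 0 < T) {γ : ℝ} (hγ : 0 < γ) {g : ℝ → ℝ} (hg : Continuous g)
    (hgz : ∀ s, s ∉ Set.Ioo 0 T → g s = 0) {M : ℝ} (hM : ∀ s, |g s| ≤ M) (x : ℝ) :
    Integrable (fun τ => kk γ (x - τ) * g τ) := by
  have hker : IntegrableOn (fun τ => kk γ (x - τ)) (Set.Ioc 0 T) :=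
    integrableOn_kk_sub hγ x hT.le
  have h1 : IntegrableOn (fun τ => g τ * kk γ (x - τ)) (Set.Ioc 0 T) :=
    hker.bdd_mul hg.aestronglyMeasurable.restrict
      (Filter.Eventually.of_forall fun τ => by rw [Real.norm_eq_abs]; exact hM τ)
  have h2 : IntegrableOn (fun τ => kk γ (x - τ) * g τ) (Set.Ioc 0 T) :=
    h1.congr_fun (fun τ _ => mul_comm _ _) measurableSet_Ioc
  rw [← integrableOn_iff_integrable_of_support_subset (s := Set.Ioc 0 T) ?_]
  · exact h2
  · intro τ hτ
    by_contra hmem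
    have hg0 : g τ = 0 := hgz τ (fun hm => hmem ⟨hm.1, hm.2.le⟩)
    apply hτ
    show kk γ (x - τ) * g τ = 0
    rw [hg0, mul_zero]

/-- Fubini computation: convolution of two kernels against `v`. -/
lemma fubini_rep (hT : 0 < T) {a b : ℝ} (hA : 0 < a) (hB : 0 < b) (hab : a + b = 1)
    {v : ℝ → ℝ} (hv : Continuous v) (hvz : ∀ s, s ∉ Set.Ioo 0 T → v s = 0)
    {M : ℝ} (hM : ∀ s, |v s| ≤ M) {t : ℝ} (ht0 : 0 ≤ t) :
    ∫ σ, kk a (t - σ) * ∫ τ, kk b (σ - τ) * v τ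
      = Real.Gamma a * Real.Gamma b * ∫ τ in Set.Iio t, v τ := by
  have hM0 : 0 ≤ M := le_trans (abs_nonneg _) (hM 0)
  set J : ℝ → ℝ → ℝ := fun σ τ => kk a (t - σ) * kk b (σ - τ) * v τ with hJ
  have hJms : AEStronglyMeasurable (Function.uncurry J) (volume.prod volume) := by
    apply Measurable.aestronglyMeasurable
    exact (((measurable_kk a).comp (measurable_const.sub measurable_fst)).mul
      ((measurable_kk b).comp (measurable_fst.sub measurable_snd))).mul
      (hv.measurable.comp measurable_snd)
  set CE : ℝ := ∫ r in Set.Ioc 0 t, kk b r with hCE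
  have inner_bound : ∀ σ, σ ≤ t → (∫ τ, kk b (σ - τ) * |v τ|) ≤ M * CE := by
    intro σ hσ
    have hle : ∀ τ, kk b (σ - τ) * |v τ|
        ≤ M * (Set.Ioc 0 T).indicator (fun τ' => kk b (σ - τ')) τ := by
      intro τ
      by_cases hτ : τ ∈ Set.Ioc 0 T
      · rw [Set.indicator_of_mem hτ, mul_comm M _]
        exact mul_le_mul_of_nonneg_left (hM τ) (kk_nonneg _ _)
      · rw [Set.indicator_of_notMem hτ, mul_zero]
        have hvτ : v τ = 0 := hvz τ (fun hmem => hτ ⟨hmem.1, hmem.2.le⟩)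
        rw [hvτ, abs_zero, mul_zero]
    have hint : Integrable (fun τ => kk b (σ - τ) * |v τ|) :=
      integrable_kk_mul hT hB hv.abs (fun s hs => by rw [hvz s hs, abs_zero])
        (fun s => by rw [abs_abs]; exact hM s) σ
    have hint2 : Integrable
        (fun τ => M * (Set.Ioc 0 T).indicator (fun τ' => kk b (σ - τ')) τ) :=
      (IntegrableOn.integrable_indicator (integrableOn_kk_sub hB σ hT.le)
        measurableSet_Ioc).const_mul M
    calc (∫ τ, kk b (σ - τ) * |v τ|)
        ≤ ∫ τ, M * (Set.Ioc 0 T).indicator (fun τ' => kk b (σ - τ')) τ :=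
          integral_mono hint hint2 hle
      _ = M * ∫ τ in Set.Ioc 0 T, kk b (σ - τ) := by
          rw [integral_const_mul, integral_indicator measurableSet_Ioc]
      _ ≤ M * CE := by
          apply mul_le_mul_of_nonneg_left ?_ hM0
          have heq2 : ∫ τ in Set.Ioc 0 T, kk b (σ - τ) = ∫ r in Set.Ioc (σ - T) σ, kk b r := by
            rw [← intervalIntegral.integral_of_le hT.le,
              intervalIntegral.integral_comp_sub_left (kk b) σ, sub_zero,
              intervalIntegral.integral_of_le (by linarith : σ - T ≤ σ)]
          rw [heq2, hCE]
          exact kk_setIntegral_le hB hσ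
  have key : Integrable (Function.uncurry J) (volume.prod volume) := by
    rw [integrable_prod_iff hJms]
    constructor
    · apply Filter.Eventually.of_forall
      intro σ
      have h := (integrable_kk_mul hT hB hv hvz hM σ).const_mul (kk a (t - σ))
      apply h.congr
      apply Filter.Eventually.of_forall
      intro τ
      simp only [hJ, Function.uncurry_apply_pair]
      ring
    · apply Integrable.mono'
        (g := fun σ => (Set.Ioc 0 t).indicator (fun σ' => kk a (t - σ')) σ * (M * CE))
      · exact (IntegrableOn.integrable_indicator
          (integrableOn_kk_sub hA t ht0) measurableSet_Ioc).mul_const _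
      · exact hJms.norm.integral_prod_right'
      · apply Filter.Eventually.of_forall
        intro σ
        simp only [Function.uncurry_apply_pair]
        have hnn : 0 ≤ ∫ τ, ‖J σ τ‖ := integral_nonneg fun τ => norm_nonneg _
        rw [Real.norm_of_nonneg hnn]
        have hJnorm : ∀ τ, ‖J σ τ‖ = kk a (t - σ) * (kk b (σ - τ) * |v τ|) := by
          intro τ
          rw [hJ]
          show |kk a (t - σ) * kk b (σ - τ) * v τ| = _
          rw [abs_mul, abs_mul, abs_of_nonneg (kk_nonneg a _),
            abs_of_nonneg (kk_nonneg b _), mul_assoc]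
        by_cases hσ : σ ∈ Set.Ioc 0 t
        · rw [Set.indicator_of_mem hσ]
          calc (∫ τ, ‖J σ τ‖) = kk a (t - σ) * ∫ τ, kk b (σ - τ) * |v τ| := by
                simp_rw [hJnorm]; exact integral_const_mul _ _
            _ ≤ kk a (t - σ) * (M * CE) :=
                mul_le_mul_of_nonneg_left (inner_bound σ hσ.2) (kk_nonneg _ _)
        · rw [Set.indicator_of_notMem hσ, zero_mul]
          have hzero : ∀ τ, ‖J σ τ‖ = 0 := by
            intro τ
            rw [hJnorm]
            rcases le_or_gt σ 0 with h1 | h1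
            · rcases le_or_gt τ 0 with h2 | h2
              · rw [hvz τ (fun hm => absurd hm.1 (by linarith)), abs_zero, mul_zero, mul_zero]
              · rw [kk_of_nonpos b (by linarith), zero_mul, mul_zero]
            · have h2 : t < σ := by
                by_contra hcon
                exact hσ ⟨h1, not_lt.1 hcon⟩
              rw [kk_of_nonpos a (by linarith), zero_mul]
          simp only [hzero, integral_zero, le_refl]
  have swap := integral_integral_swap key
  have hL : (∫ σ, ∫ τ, J σ τ) = ∫ σ, kk a (t - σ) * ∫ τ, kk b (σ - τ) * v τ := by
    congr 1
    funext σ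
    simp_rw [hJ, mul_assoc]
    exact integral_const_mul _ _
  have hR : (∫ τ, ∫ σ, J σ τ) = Real.Gamma a * Real.Gamma b * ∫ τ in Set.Iio t, v τ := by
    have hτeq : ∀ τ, (∫ σ, J σ τ)
        = (Set.Iio t).indicator (fun τ' => Real.Gamma a * Real.Gamma b * v τ') τ := by
      intro τ
      have h1 : (∫ σ, J σ τ) = (∫ σ, kk a (t - σ) * kk b (σ - τ)) * v τ := by
        simp_rw [hJ]
        exact integral_mul_const _ _
      rw [h1, kernel_conv hA hB hab t τ]
      by_cases hτ : τ < t
      · rw [if_pos hτ, Set.indicator_of_mem (Set.mem_Iio.2 hτ)]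
      · rw [if_neg hτ, Set.indicator_of_notMem (fun hmm => hτ (Set.mem_Iio.1 hmm)), zero_mul]
    simp_rw [hτeq]
    rw [integral_indicator measurableSet_Iio, integral_const_mul]
  rw [hL, hR] at swap
  exact swap

/-- FTC: integrating the derivative over `Iio t` recovers `u t`. -/
lemma integral_Iio_eq (hT : 0 < T) {u : ℝ → ℝ} (hu : ContDiff ℝ (⊤ : ℕ∞) u)
    (hsupp : tsupport u ⊆ Set.Ioo 0 T) (t : ℝ) :
    ∫ τ in Set.Iio t, deriv u τ = u t := by
  have hvz : ∀ s, s ∉ Set.Ioo 0 T → deriv u s = 0 := by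
    intro s hs
    by_contra h
    exact hs (hsupp (support_deriv_subset (by simpa using h)))
  have hcs : HasCompactSupport u :=
    IsCompact.of_isClosed_subset isCompact_Icc (isClosed_tsupport u)
      (hsupp.trans Set.Ioo_subset_Icc_self)
  have hvint : Integrable (deriv u) :=
    (hu.continuous_deriv (by exact_mod_cast le_top)).integrable_of_hasCompactSupport hcs.deriv
  set a : ℝ := min t 0 - 1 with ha
  have hat : a < t := by
    have h1 : min t 0 ≤ t := min_le_left _ _
    rw [ha]; linarith
  have ha0 : a < 0 := by
    have h1 : min t 0 ≤ 0 := min_le_right _ _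
    rw [ha]; linarith
  have hsplit : Set.Iio t = Set.Iio a ∪ Set.Ico a t := (Set.Iio_union_Ico_eq_Iio hat.le).symm
  rw [hsplit, setIntegral_union ?_ measurableSet_Ico hvint.integrableOn hvint.integrableOn]
  · have h0 : ∫ τ in Set.Iio a, deriv u τ = 0 := by
      rw [setIntegral_congr_fun measurableSet_Iio (g := fun _ => (0:ℝ))
        (fun τ hτ => hvz τ (fun hm => absurd hm.1 (by simp only [Set.mem_Iio] at hτ; linarith)))]
      simp
    rw [h0, zero_add, integral_Ico_eq_integral_Ioo, ← integral_Ioc_eq_integral_Ioo,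
      ← intervalIntegral.integral_of_le hat.le,
      intervalIntegral.integral_deriv_eq_sub
        (fun x _ => (hu.differentiable (by simp)) x) hvint.intervalIntegrable]
    have hua : u a = 0 := image_eq_zero_of_notMem_tsupport
      (fun hmem => absurd (hsupp hmem).1 (by linarith))
    rw [hua, sub_zero]
  · apply Set.disjoint_left.mpr
    intro x hx hx2
    exact absurd hx2.1 (not_le.2 hx)

/-- Formula for the Riemann-Liouville derivative when `α < 1`. -/
lemma leftRLderiv_eq (hT : 0 < T) {α : ℝ} (hα1 : α < 1) {u : ℝ → ℝ}
    (hu : ContDiff ℝ (⊤ : ℕ∞) u) (hsupp : tsupport u ⊆ Set.Ioo 0 T) (s : ℝ) :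
    leftRLderiv α u s = (1 / Real.Gamma (1 - α)) * ∫ r, kk (1 - α) r * deriv u (s - r) := by
  have hβ0 : 0 < 1 - α := by linarith
  have hwz : ∀ x, x ∉ Set.Ioo 0 T → u x = 0 := fun x hx =>
    image_eq_zero_of_notMem_tsupport (fun h => hx (hsupp h))
  have heq : leftRLintegral (1 - α) u
      = fun x => (1 / Real.Gamma (1 - α)) * ((fun y => ∫ r, kk (1 - α) r * u (y - r)) x) := by
    funext x
    rw [leftRLintegral_eq hu.continuous hwz x, integral_shift]
  simp only [leftRLderiv, if_neg (ne_of_lt hα1)]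
  rw [heq, deriv_const_mul _ (hasDerivAt_Phi hβ0 hu hsupp s).differentiableAt,
    (hasDerivAt_Phi hβ0 hu hsupp s).deriv]

end Main

lemma memℒp_of_integrable_rpow {μ : Measure ℝ} {f : ℝ → ℝ} {r : ℝ} (hr : 0 < r)
    (hf : AEStronglyMeasurable f μ) (hi : Integrable (fun x => ‖f x‖ ^ r) μ) :
    MemLp f (ENNReal.ofReal r) μ := by
  have h0 : ENNReal.ofReal r ≠ 0 := by simp [ENNReal.ofReal_eq_zero, not_le, hr]
  have htop : ENNReal.ofReal r ≠ ⊤ := ENNReal.ofReal_ne_top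
  apply (memLp_norm_rpow_iff (p := ENNReal.ofReal r) (q := ENNReal.ofReal r) hf h0 htop).1
  rw [ENNReal.toReal_ofReal hr.le, ENNReal.div_self h0 htop]
  exact memLp_one_iff_integrable.2 hi

/-- The final Hölder estimate. -/
lemma holder_final {T α p q : ℝ} (hT : 0 < T) (hp : 1 < p) (hα : 1 / p < α) (hα1 : α ≤ 1)
    (hpq : p.HolderConjugate q)
    {g : ℝ → ℝ} (hgc : Continuous g) (hgz : ∀ s, s ≤ 0 → g s = 0)
    {U t : ℝ} (ht0 : 0 ≤ t) (htT : t ≤ T)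
    (hrep : Real.Gamma α * U = ∫ σ, kk α (t - σ) * g σ) :
    |U| ≤ (T ^ (α - 1 / p) / (Real.Gamma α * (α * q - q + 1) ^ (1 / q)))
        * (∫ s in (0:ℝ)..T, |g s| ^ p) ^ (1 / p) := by
  have hp0 : 0 < p := lt_trans one_pos hp
  have hq1 : 1 < q := hpq.symm.lt
  have hq0 : 0 < q := lt_trans one_pos hq1
  have hinv : 1 / p + 1 / q = 1 := by
    have h := hpq.inv_add_inv_eq_one
    rw [one_div, one_div]
    exact h
  have hα0 : 0 < α := lt_trans (by positivity) hα
  have hΓα : 0 < Real.Gamma α := Real.Gamma_pos_of_pos hα0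
  have hexp0 : 0 ≤ α - 1 / p := le_of_lt (sub_pos.2 hα)
  have hA : 0 < α * q - q + 1 := by
    have h1 : 1 - 1 / q < α := by linarith
    have h2 : (1 - 1 / q) * q < α * q := mul_lt_mul_of_pos_right h1 hq0
    have h3 : (1 - 1 / q) * q = q - 1 := by field_simp
    linarith
  have hc : (-1 : ℝ) < (α - 1) * q := by
    have : (α - 1) * q = α * q - q := by ring
    linarith
  -- reduce to the interval (0, t)
  have hstep : (∫ σ, kk α (t - σ) * g σ) = ∫ σ in Set.Ioo 0 t, kk α (t - σ) * g σ := by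
    refine (setIntegral_eq_integral_of_forall_compl_eq_zero ?_).symm
    intro σ hσ
    rcases le_or_gt σ 0 with h1 | h1
    · rw [hgz σ h1, mul_zero]
    · have h2 : t ≤ σ := by
        by_contra hcon
        exact hσ ⟨h1, not_le.1 hcon⟩
      rw [kk_of_nonpos α (by linarith), zero_mul]
  -- Hölder
  have hikq : IntegrableOn (fun σ => ‖kk α (t - σ)‖ ^ q) (Set.Ioo 0 t) := by
    have h1 := (intervalIntegral.intervalIntegrable_rpow' (a := 0) (b := t) hc).comp_sub_left t
    rw [sub_zero, sub_self] at h1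
    have h2 : IntegrableOn (fun σ => (t - σ) ^ ((α - 1) * q)) (Set.Ioc 0 t) := by
      rw [← intervalIntegrable_iff_integrableOn_Ioc_of_le ht0]
      exact h1.symm
    apply (h2.mono_set Set.Ioo_subset_Ioc_self).congr_fun ?_ measurableSet_Ioo
    intro σ hσ
    show (t - σ) ^ ((α - 1) * q) = ‖kk α (t - σ)‖ ^ q
    rw [kk_of_pos α (by linarith [hσ.2] : (0:ℝ) < t - σ), Real.norm_eq_abs,
      abs_of_nonneg (Real.rpow_nonneg (by linarith [hσ.2]) _),
      ← Real.rpow_mul (by linarith [hσ.2] : (0:ℝ) ≤ t - σ)]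
  have hmk : MemLp (fun σ => kk α (t - σ)) (ENNReal.ofReal q)
      (volume.restrict (Set.Ioo 0 t)) :=
    memℒp_of_integrable_rpow hq0
      ((measurable_kk α).comp (measurable_const.sub measurable_id)).aestronglyMeasurable hikq
  have hipg : IntegrableOn (fun σ => ‖g σ‖ ^ p) (Set.Ioc 0 T) :=
    (hgc.norm.rpow_const (fun x => Or.inr hp0.le)).integrableOn_Ioc
  have hmg : MemLp g (ENNReal.ofReal p) (volume.restrict (Set.Ioo 0 t)) :=
    memℒp_of_integrable_rpow hp0 hgc.aestronglyMeasurable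
      (hipg.mono_set (fun σ hσ => ⟨hσ.1, le_trans hσ.2.le htT⟩))
  have holder := integral_mul_norm_le_Lp_mul_Lq hpq.symm hmk hmg
  -- kernel integral value
  have hkval : (∫ σ in Set.Ioo 0 t, ‖kk α (t - σ)‖ ^ q)
      = t ^ (α * q - q + 1) / (α * q - q + 1) := by
    rw [setIntegral_congr_fun measurableSet_Ioo
      (g := fun σ => (t - σ) ^ ((α - 1) * q)) ?_]
    · rw [← integral_Ioc_eq_integral_Ioo, ← intervalIntegral.integral_of_le ht0,
        intervalIntegral.integral_comp_sub_left (fun r : ℝ => r ^ ((α - 1) * q)) t,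
        sub_zero, sub_self, integral_rpow (Or.inl hc),
        Real.zero_rpow (by linarith : (α - 1) * q + 1 ≠ 0),
        show (α - 1) * q + 1 = α * q - q + 1 by ring, sub_zero]
    · intro σ hσ
      show ‖kk α (t - σ)‖ ^ q = (t - σ) ^ ((α - 1) * q)
      rw [kk_of_pos α (by linarith [hσ.2] : (0:ℝ) < t - σ), Real.norm_eq_abs,
        abs_of_nonneg (Real.rpow_nonneg (by linarith [hσ.2]) _),
        ← Real.rpow_mul (by linarith [hσ.2] : (0:ℝ) ≤ t - σ)]
  -- chain of inequalities
  set Y : ℝ := (∫ σ in Set.Ioc 0 T, ‖g σ‖ ^ p) ^ (1 / p) with hY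
  have hY0 : 0 ≤ Y := Real.rpow_nonneg
    (setIntegral_nonneg measurableSet_Ioc fun σ _ => Real.rpow_nonneg (norm_nonneg _) _) _
  have hYmono : (∫ σ in Set.Ioo 0 t, ‖g σ‖ ^ p) ^ (1 / p) ≤ Y := by
    apply Real.rpow_le_rpow
      (setIntegral_nonneg measurableSet_Ioo fun σ _ => Real.rpow_nonneg (norm_nonneg _) _)
      ?_ (by positivity)
    apply setIntegral_mono_set hipg
    · filter_upwards with σ
      exact Real.rpow_nonneg (norm_nonneg _) _
    · exact HasSubset.Subset.eventuallyLE (fun σ hσ => ⟨hσ.1, le_trans hσ.2.le htT⟩)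
  have habs : Real.Gamma α * |U| = |∫ σ, kk α (t - σ) * g σ| := by
    rw [← abs_of_pos hΓα, ← abs_mul, hrep]
  have hnorm_le : |∫ σ, kk α (t - σ) * g σ|
      ≤ (t ^ (α * q - q + 1) / (α * q - q + 1)) ^ (1 / q) * Y := by
    rw [hstep]
    calc |∫ σ in Set.Ioo 0 t, kk α (t - σ) * g σ|
        = ‖∫ σ in Set.Ioo 0 t, kk α (t - σ) * g σ‖ := (Real.norm_eq_abs _).symm
      _ ≤ ∫ σ in Set.Ioo 0 t, ‖kk α (t - σ) * g σ‖ := norm_integral_le_integral_norm _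
      _ = ∫ σ in Set.Ioo 0 t, ‖kk α (t - σ)‖ * ‖g σ‖ := by
          apply setIntegral_congr_fun measurableSet_Ioo
          intro σ _
          show ‖kk α (t - σ) * g σ‖ = ‖kk α (t - σ)‖ * ‖g σ‖
          rw [norm_mul]
      _ ≤ (∫ σ in Set.Ioo 0 t, ‖kk α (t - σ)‖ ^ q) ^ (1 / q)
            * (∫ σ in Set.Ioo 0 t, ‖g σ‖ ^ p) ^ (1 / p) := holder
      _ ≤ (t ^ (α * q - q + 1) / (α * q - q + 1)) ^ (1 / q) * Y := by
          rw [hkval]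
          exact mul_le_mul_of_nonneg_left hYmono (Real.rpow_nonneg (by positivity) _)
  have hkbound : (t ^ (α * q - q + 1) / (α * q - q + 1)) ^ (1 / q)
      ≤ T ^ (α - 1 / p) / (α * q - q + 1) ^ (1 / q) := by
    rw [Real.div_rpow (Real.rpow_nonneg ht0 _) hA.le]
    apply (div_le_div_iff_of_pos_right (by positivity : (0:ℝ) < (α * q - q + 1) ^ (1 / q))).2
    rw [← Real.rpow_mul ht0]
    have hexp : (α * q - q + 1) * (1 / q) = α - 1 / p := by
      have h1q : (1:ℝ) / p = 1 - 1 / q := by linarith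
      rw [h1q]
      field_simp
      ring
    rw [hexp]
    exact Real.rpow_le_rpow ht0 htT hexp0
  have hchain : Real.Gamma α * |U| ≤ T ^ (α - 1 / p) / (α * q - q + 1) ^ (1 / q) * Y := by
    rw [habs]
    refine le_trans hnorm_le ?_
    exact mul_le_mul_of_nonneg_right hkbound hY0
  have hIeq : (∫ s in (0:ℝ)..T, |g s| ^ p) = ∫ σ in Set.Ioc 0 T, ‖g σ‖ ^ p := by
    rw [intervalIntegral.integral_of_le hT.le]
    apply setIntegral_congr_fun measurableSet_Ioc
    intro σ _
    show |g σ| ^ p = ‖g σ‖ ^ p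
    rw [Real.norm_eq_abs]
  rw [hIeq, ← hY]
  have hgoal : |U| ≤ T ^ (α - 1 / p) / (α * q - q + 1) ^ (1 / q) * Y / Real.Gamma α := by
    rw [le_div_iff₀ hΓα]
    calc |U| * Real.Gamma α = Real.Gamma α * |U| := mul_comm _ _
      _ ≤ _ := hchain
  refine le_trans hgoal (le_of_eq ?_)
  ring

end Stmt17Aux

/-- sup-norm bound
`‖u‖_∞ ≤ (T^{α−1/p}/(Γ(α)(αq−q+1)^{1/q}))‖₀D_t^α u‖_{L^p}` for `α > 1/p`. -/
theorem stmt_17 (T α p q : ℝ) (hT : 0 < T) (hp : 1 < p) (hα : 1 / p < α) (hα1 : α ≤ 1)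
    (hq : q = p / (p - 1))
    (u : ℝ → ℝ) (hu : ContDiff ℝ (⊤ : ℕ∞) u) (hsupp : tsupport u ⊆ Set.Ioo 0 T) :
    ∀ t ∈ Set.Icc (0:ℝ) T,
      |u t| ≤ (T ^ (α - 1 / p) / (Real.Gamma α * (α * q - q + 1) ^ (1 / q)))
        * (∫ s in (0:ℝ)..T, |leftRLderiv α u s| ^ p) ^ (1 / p) := by
  intro t ht
  obtain ⟨ht0, htT⟩ := ht
  have hp0 : (0:ℝ) < p := lt_trans one_pos hp
  have hpq : p.HolderConjugate q := (Real.holderConjugate_iff_eq_conjExponent hp).2 hq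
  have hα0 : 0 < α := lt_trans (by positivity) hα
  have hΓα : 0 < Real.Gamma α := Real.Gamma_pos_of_pos hα0
  -- properties of u and its derivative
  have hwz : ∀ x, x ∉ Set.Ioo 0 T → u x = 0 := fun x hx =>
    image_eq_zero_of_notMem_tsupport (fun h => hx (hsupp h))
  have hvc : Continuous (deriv u) := hu.continuous_deriv (by simp)
  have hsuppv : tsupport (deriv u) ⊆ Set.Ioo 0 T :=
    Set.Subset.trans (closure_minimal support_deriv_subset (isClosed_tsupport u)) hsupp
  have hvz : ∀ x, x ∉ Set.Ioo 0 T → deriv u x = 0 := fun x hx =>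
    image_eq_zero_of_notMem_tsupport (fun h => hx (hsuppv h))
  have hcsv : HasCompactSupport (deriv u) :=
    IsCompact.of_isClosed_subset isCompact_Icc (isClosed_tsupport _)
      (hsuppv.trans Set.Ioo_subset_Icc_self)
  obtain ⟨Mv, hMv⟩ := hcsv.exists_bound_of_continuous hvc
  simp only [Real.norm_eq_abs] at hMv
  rcases eq_or_lt_of_le hα1 with heq1 | hlt1
  · -- case α = 1
    subst heq1
    have hgderiv : leftRLderiv 1 u = deriv u := by
      simp [leftRLderiv]
    have hrep : Real.Gamma 1 * u t = ∫ σ, Stmt17Aux.kk 1 (t - σ) * leftRLderiv 1 u σ := by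
      rw [Real.Gamma_one, one_mul, hgderiv]
      rw [show (fun σ => Stmt17Aux.kk 1 (t - σ) * deriv u σ)
          = fun σ => (Set.Iio t).indicator (deriv u) σ from ?_]
      · rw [integral_indicator measurableSet_Iio, Stmt17Aux.integral_Iio_eq hT (hu.of_le (by simp)) hsupp t]
      · funext σ
        by_cases hσ : σ < t
        · rw [Set.indicator_of_mem (Set.mem_Iio.2 hσ), Stmt17Aux.kk_of_pos 1 (by linarith)]
          norm_num
        · rw [Set.indicator_of_notMem (fun hmm => hσ (Set.mem_Iio.1 hmm)),
            Stmt17Aux.kk_of_nonpos 1 (by linarith [not_lt.1 hσ]), zero_mul]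
    exact Stmt17Aux.holder_final hT hp hα le_rfl hpq (hgderiv ▸ hvc)
      (fun s hs => by rw [hgderiv]; exact hvz s (fun hm => absurd hm.1 (by linarith)))
      ht0 htT hrep
  · -- case α < 1
    set β : ℝ := 1 - α with hβ
    have hβ0 : 0 < β := by rw [hβ]; linarith
    have hΓβ : 0 < Real.Gamma β := Real.Gamma_pos_of_pos hβ0
    have hucd : ContDiff ℝ (⊤ : ℕ∞) (deriv u) :=
      (contDiff_infty_iff_deriv.1 (hu.of_le (by simp))).2
    have hgform : ∀ s, leftRLderiv α u s
        = (1 / Real.Gamma β) * ∫ r, Stmt17Aux.kk β r * deriv u (s - r) :=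
      fun s => Stmt17Aux.leftRLderiv_eq hT hlt1 (hu.of_le (by simp)) hsupp s
    have hPdiff : ∀ s, HasDerivAt (fun y => ∫ r, Stmt17Aux.kk β r * deriv u (y - r))
        (∫ r, Stmt17Aux.kk β r * deriv (deriv u) (s - r)) s :=
      fun s => Stmt17Aux.hasDerivAt_Phi hβ0 hucd hsuppv s
    have hPcont : Continuous (fun y => ∫ r, Stmt17Aux.kk β r * deriv u (y - r)) := by
      exact continuous_iff_continuousAt.2 fun s => (hPdiff s).continuousAt
    have hgc : Continuous (leftRLderiv α u) := by
      rw [show leftRLderiv α u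
          = fun s => (1 / Real.Gamma β) * ∫ r, Stmt17Aux.kk β r * deriv u (s - r) from
        funext hgform]
      exact continuous_const.mul hPcont
    have hgz : ∀ s, s ≤ 0 → leftRLderiv α u s = 0 := by
      intro s hs
      rw [hgform s]
      have : (fun r => Stmt17Aux.kk β r * deriv u (s - r)) = fun _ => (0:ℝ) := by
        funext r
        rcases le_or_gt r 0 with h1 | h1
        · rw [Stmt17Aux.kk_of_nonpos β h1, zero_mul]
        · rw [hvz (s - r) (fun hm => absurd hm.1 (by linarith)), mul_zero]
      rw [this, integral_zero, mul_zero]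
    have hrep : Real.Gamma α * u t = ∫ σ, Stmt17Aux.kk α (t - σ) * leftRLderiv α u σ := by
      have hshift : ∀ σ, (∫ r, Stmt17Aux.kk β r * deriv u (σ - r))
          = ∫ τ, Stmt17Aux.kk β (σ - τ) * deriv u τ :=
        fun σ => (Stmt17Aux.integral_shift β (deriv u) σ).symm
      have h1 : (∫ σ, Stmt17Aux.kk α (t - σ) * leftRLderiv α u σ)
          = (1 / Real.Gamma β)
            * ∫ σ, Stmt17Aux.kk α (t - σ) * ∫ τ, Stmt17Aux.kk β (σ - τ) * deriv u τ := by
        rw [← integral_const_mul]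
        congr 1
        funext σ
        rw [hgform σ, hshift σ]
        ring
      rw [h1, Stmt17Aux.fubini_rep hT hα0 hβ0 (by rw [hβ]; ring) hvc hvz hMv ht0,
        Stmt17Aux.integral_Iio_eq hT (hu.of_le (by simp)) hsupp t]
      rw [div_mul_eq_mul_div, one_mul]
      rw [show Real.Gamma α * Real.Gamma β * u t / Real.Gamma β
          = Real.Gamma α * u t * (Real.Gamma β / Real.Gamma β) by ring,
        div_self (ne_of_gt hΓβ), mul_one]
    exact Stmt17Aux.holder_final hT hp hα hα1 hpq hgc hgz ht0 htT hrep
end
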